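/- Let n ≥ 4 and let i be an integer with 2 ≤ i ≤ n−2. Then the number of permutations p of {1,…,n} in which the entry p_i has exactly one child in the minmax tree T^m_p is exactly n!/3. -/

import Mathlib

/-- Binary trees with natural-number labels, used to model minmax trees of
permutations. -/
inductive BTree where
  | nil : BTree
  | node : ℕ → BTree → BTree → BTree
deriving DecidableEq, Repr

namespace BTree

/-- The label of the root (if any). -/
def rootVal : BTree → Option ℕ
  | .nil => none
  | .node v _ _ => some v

/-- Whether the value `x` occurs as a label in the tree. -/
def memB : BTree → ℕ → Bool
  | .nil, _ => false
  | .node v l r, x => (x == v) || memB l x || memB r x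

/-- The number of children of the (unique, for permutations) node labelled `x`. -/
def numChildren : BTree → ℕ → ℕ
  | .nil, _ => 0
  | .node v l r, x =>
      if x = v then (if l = .nil then 0 else 1) + (if r = .nil then 0 else 1)
      else numChildren l x + numChildren r x

/-- `x` is a leaf of the tree: it occurs in the tree and has no children. -/
def IsLeaf (t : BTree) (x : ℕ) : Prop := t.memB x = true ∧ t.numChildren x = 0

instance (t : BTree) (x : ℕ) : Decidable (t.IsLeaf x) := by unfold IsLeaf; infer_instance

/-- `childB t x y = true` iff `x` is a child of `y` in `t`, i.e. `x` is the root of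
the left or the right subtree hanging from `y`. -/
def childB : BTree → ℕ → ℕ → Bool
  | .nil, _, _ => false
  | .node v l r, x, y =>
      ((y == v) && (l.rootVal == some x || r.rootVal == some x))
      || childB l x y || childB r x y

/-- `ancB t x y = true` iff `x` is a (strict) ancestor of `y` in `t`, i.e. `y` lies
in a subtree hanging from `x`. -/
def ancB : BTree → ℕ → ℕ → Bool
  | .nil, _, _ => false
  | .node v l r, x, y =>
      ((x == v) && (memB l y || memB r y)) || ancB l x y || ancB r x y

end BTree

/-- `x` is the leftmost-eligible extreme letter of `l`: the minimum or the maximum. -/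
def isExtreme (l : List ℕ) (x : ℕ) : Bool :=
  (l.min? == some x) || (l.max? == some x)

/-- Fuelled construction of the minmax tree of a list of distinct naturals:
split the list as `u ++ [m] ++ v` where `m` is the leftmost of the minimum and
maximum letters, put `m` at the root and recurse on `u` (left) and `v` (right). -/
def mmAux : ℕ → List ℕ → BTree
  | 0, _ => .nil
  | fuel+1, l =>
    if l.isEmpty then .nil
    else
      let k := l.findIdx (isExtreme l)
      .node (l.getD k 0) (mmAux fuel (l.take k)) (mmAux fuel (l.drop (k+1)))

/-- The minmax tree `T^m_p` of a word `l` (with distinct letters). -/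
def minmaxTree (l : List ℕ) : BTree := mmAux l.length l

/-- The word `p_1 p_2 … p_n` on the letters `{1,…,n}` associated to a permutation
`p` of `Fin n`. -/
def permList (n : ℕ) (p : Equiv.Perm (Fin n)) : List ℕ :=
  List.ofFn (fun i => (p i : ℕ) + 1)

/-- The `i`-th entry `p_i` (1-indexed) of the permutation `p`. -/
def entryAt (n : ℕ) (p : Equiv.Perm (Fin n)) (i : ℕ) : ℕ :=
  (permList n p).getD (i - 1) 0

open Finset
open scoped Nat

/-!
The root of the minmax tree of a word `u r v` on a letter set `S` with `#S = m ≥ 2` is one of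
the two extreme letters of `S`, and `u` avoids both extremes; conversely every such
concatenation has root `r`. So `2 (m-2)! (m-1-s)` words have their root at position `s + 1`,
and given that position `u` and `v` are arbitrary words on their letters. The root has exactly
one child iff `u` is empty (`v` contains the other extreme), and every other entry has the same
children as in the tree of `u` or of `v`. Hence the proportion of words whose `j`-th entry has
one child is an average, with weights linear in `s`, of the corresponding proportions for `u`
and `v`. By strong induction it is `0` at the last position, `1` for `m = 2`, `2/3` at
positions `1` and `m - 1`, and `1/3` elsewhere: in each case the average is the constant plus
corrections at a few values of `s`, which cancel because the weights are linear.
-/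

theorem findIdx_isExtreme_lt_length {l : List ℕ} (hl : l ≠ []) :
    l.findIdx (isExtreme l) < l.length := by
  obtain ⟨a, ha⟩ := Option.ne_none_iff_exists'.mp (mt List.min?_eq_none_iff.mp hl)
  exact List.findIdx_lt_length_of_exists ⟨a, List.min?_mem ha, by simp [isExtreme, ha]⟩

theorem mmAux_eq_minmaxTree {f : ℕ} {l : List ℕ} (hf : l.length ≤ f) :
    mmAux f l = minmaxTree l := by
  suffices ∀ f g (l : List ℕ), l.length ≤ f → l.length ≤ g → mmAux f l = mmAux g l from
    this f _ l hf le_rfl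
  intro f
  induction f with
  | zero => intro g l hf _; cases l <;> cases g <;> simp_all [mmAux]
  | succ f ih =>
    intro g l hf hg
    rcases eq_or_ne l [] with rfl | hl
    · cases g <;> simp [mmAux]
    obtain ⟨g, rfl⟩ : ∃ g', g = g' + 1 :=
      Nat.exists_eq_add_one.mpr ((List.length_pos_iff.mpr hl).trans_le hg)
    have hk := findIdx_isExtreme_lt_length hl
    simp only [mmAux, List.isEmpty_eq_false_iff.mpr hl]
    rw [ih g _ (by simp; omega) (by simp; omega), ih g _ (by simp; omega) (by simp; omega)]

theorem minmaxTree_eq_node {l : List ℕ} (hl : l ≠ []) :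
    minmaxTree l = .node (l.getD (l.findIdx (isExtreme l)) 0)
      (minmaxTree (l.take (l.findIdx (isExtreme l))))
      (minmaxTree (l.drop (l.findIdx (isExtreme l) + 1))) := by
  have hk := findIdx_isExtreme_lt_length hl
  obtain ⟨f, hf⟩ : ∃ f, l.length = f + 1 := Nat.exists_eq_add_one.mpr (by omega)
  rw [minmaxTree, hf, mmAux, if_neg (by simpa using hl)]
  dsimp only
  rw [mmAux_eq_minmaxTree (by simp; omega), mmAux_eq_minmaxTree (by simp; omega)]

theorem minmaxTree_eq_nil_iff {l : List ℕ} : minmaxTree l = .nil ↔ l = [] := by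
  refine ⟨fun h => ?_, fun h => h ▸ rfl⟩
  by_contra hl
  rw [minmaxTree_eq_node hl] at h
  cases h

theorem numChildren_minmaxTree_of_notMem {l : List ℕ} {x : ℕ} (hx : x ∉ l) :
    (minmaxTree l).numChildren x = 0 := by
  induction h : l.length using Nat.strong_induction_on generalizing l with
  | _ n ih =>
  rcases eq_or_ne l [] with rfl | hl
  · rfl
  have hk := findIdx_isExtreme_lt_length hl
  have hroot : x ≠ l.getD (l.findIdx (isExtreme l)) 0 := by
    rw [List.getD_eq_getElem _ _ hk]
    exact fun h => hx (h ▸ List.getElem_mem hk)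
  rw [minmaxTree_eq_node hl, BTree.numChildren, if_neg hroot,
    ih _ (by simp; omega) (fun h => hx (List.mem_of_mem_take h)) rfl,
    ih _ (by simp; omega) (fun h => hx (List.mem_of_mem_drop h)) rfl]

theorem findIdx_isExtreme_append_cons_of_isExtreme {u v : List ℕ} {r : ℕ}
    (hu : ∀ x ∈ u, isExtreme (u ++ r :: v) x = false) (hr : isExtreme (u ++ r :: v) r = true) :
    (u ++ r :: v).findIdx (isExtreme (u ++ r :: v)) = u.length := by
  rw [List.findIdx_append, List.findIdx_eq_length.mpr hu, List.findIdx_cons, hr]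
  simp

theorem minmaxTree_append_cons {u v : List ℕ} {r : ℕ}
    (hu : ∀ x ∈ u, isExtreme (u ++ r :: v) x = false) (hr : isExtreme (u ++ r :: v) r = true) :
    minmaxTree (u ++ r :: v) = .node r (minmaxTree u) (minmaxTree v) := by
  rw [minmaxTree_eq_node (by simp), findIdx_isExtreme_append_cons_of_isExtreme hu hr,
    List.take_left, List.getD_eq_getElem _ _ (by simp)]
  simp [List.drop_append, List.drop_eq_nil_of_le]

theorem minmaxTree_singleton (x : ℕ) : minmaxTree [x] = .node x .nil .nil :=
  minmaxTree_append_cons (u := []) (v := []) (by simp) (by simp [isExtreme])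

def HasOneChildAt (j : ℕ) (l : List ℕ) : Prop :=
  (minmaxTree l).numChildren (l.getD (j - 1) 0) = 1

instance (j : ℕ) : DecidablePred (HasOneChildAt j) := fun _ => Nat.decEq _ _

theorem not_hasOneChildAt_nil (j : ℕ) : ¬ HasOneChildAt j [] := by
  simp [HasOneChildAt, minmaxTree, mmAux, BTree.numChildren]

section AppendCons

variable {u v : List ℕ} {r j : ℕ}
  (htree : minmaxTree (u ++ r :: v) = .node r (minmaxTree u) (minmaxTree v))

include htree

theorem hasOneChildAt_append_cons_of_le (hnd : (u ++ r :: v).Nodup) (hj : 1 ≤ j)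
    (hju : j ≤ u.length) : HasOneChildAt j (u ++ r :: v) ↔ HasOneChildAt j u := by
  have hlt : j - 1 < u.length := by omega
  have hx : u[j - 1] ∉ r :: v := List.disjoint_of_nodup_append hnd (List.getElem_mem hlt)
  rw [List.mem_cons, not_or] at hx
  unfold HasOneChildAt
  rw [htree, List.getD_eq_getElem _ _ (by simp; omega), List.getElem_append_left hlt,
    List.getD_eq_getElem _ _ hlt, BTree.numChildren, if_neg hx.1,
    numChildren_minmaxTree_of_notMem hx.2, add_zero]

theorem hasOneChildAt_append_cons_length (hv : v ≠ []) :
    HasOneChildAt (u.length + 1) (u ++ r :: v) ↔ u = [] := by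
  unfold HasOneChildAt
  rw [htree, List.getD_eq_getElem _ _ (by simp)]
  simp [BTree.numChildren, minmaxTree_eq_nil_iff, hv]

theorem hasOneChildAt_append_cons_of_lt (hnd : (u ++ r :: v).Nodup) (hj : u.length + 1 < j)
    (hjv : j ≤ u.length + 1 + v.length) :
    HasOneChildAt j (u ++ r :: v) ↔ HasOneChildAt (j - u.length - 1) v := by
  have hlt : j - u.length - 2 < v.length := by omega
  have hx : v[j - u.length - 2] ∉ u := fun h =>
    List.disjoint_of_nodup_append hnd h (List.mem_cons_of_mem r (List.getElem_mem hlt))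
  have hxr : v[j - u.length - 2] ≠ r := fun h =>
    (List.nodup_cons.mp (List.nodup_append.mp hnd).2.1).1 (h ▸ List.getElem_mem hlt)
  unfold HasOneChildAt
  rw [htree, List.getD_eq_getElem _ _ (by simp; omega), List.getD_eq_getElem _ _ (by omega),
    List.getElem_append_right (by omega), BTree.numChildren]
  simp only [show j - 1 - u.length = (j - u.length - 2) + 1 by omega,
    show j - u.length - 1 - 1 = j - u.length - 2 by omega, List.getElem_cons_succ]
  rw [if_neg hxr, numChildren_minmaxTree_of_notMem hx, zero_add]

end AppendCons

noncomputable def words (S : Finset ℕ) : Finset (List ℕ) := S.toList.permutations.toFinset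

theorem mem_words {S : Finset ℕ} {l : List ℕ} :
    l ∈ words S ↔ l.Nodup ∧ l.toFinset = S := by
  rw [words, List.mem_toFinset, List.mem_permutations]
  constructor
  · intro h
    refine ⟨h.nodup_iff.mpr S.nodup_toList, ?_⟩
    ext x
    rw [List.mem_toFinset, h.mem_iff, Finset.mem_toList]
  · rintro ⟨hnd, rfl⟩
    exact (List.perm_ext_iff_of_nodup hnd (Finset.nodup_toList _)).mpr (by simp)

theorem card_words (S : Finset ℕ) : #(words S) = (#S)! := by
  rw [words, List.toFinset_card_of_nodup (List.nodup_permutations _ S.nodup_toList),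
    List.length_permutations, Finset.length_toList]

theorem length_of_mem_words {S : Finset ℕ} {l : List ℕ} (hl : l ∈ words S) :
    l.length = #S := by
  obtain ⟨hnd, rfl⟩ := mem_words.mp hl
  exact (List.toFinset_card_of_nodup hnd).symm

def extremes (S : Finset ℕ) : Finset ℕ :=
  {x ∈ S | (∀ y ∈ S, x ≤ y) ∨ ∀ y ∈ S, y ≤ x}

theorem isExtreme_eq_true_iff {S : Finset ℕ} {l : List ℕ} (hl : l ∈ words S) {x : ℕ} :
    isExtreme l x = true ↔ x ∈ extremes S := by
  obtain ⟨-, rfl⟩ := mem_words.mp hl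
  simp [isExtreme, extremes, List.min?_eq_some_iff, List.max?_eq_some_iff, and_or_left]

theorem card_extremes {S : Finset ℕ} (hS : 2 ≤ #S) : #(extremes S) = 2 := by
  have hne : S.Nonempty := Finset.card_pos.mp (by omega)
  have : extremes S = {S.min' hne, S.max' hne} := by
    ext x
    simp only [extremes, mem_filter, mem_insert, mem_singleton]
    constructor
    · rintro ⟨hx, h | h⟩
      exacts [.inl (le_antisymm (h _ (S.min'_mem hne)) (S.min'_le x hx)),
        .inr (le_antisymm (S.le_max' x hx) (h _ (S.max'_mem hne)))]
    · rintro (rfl | rfl)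
      exacts [⟨S.min'_mem hne, .inl fun y hy => S.min'_le y hy⟩,
        ⟨S.max'_mem hne, .inr fun y hy => S.le_max' y hy⟩]
  rw [this, card_pair (S.min'_lt_max'_of_card hS).ne]

theorem card_sdiff_extremes {S : Finset ℕ} (hS : 2 ≤ #S) : #(S \ extremes S) = #S - 2 := by
  rw [card_sdiff_of_subset (by exact filter_subset _ _), card_extremes hS]

section Join

variable {S T : Finset ℕ} {r : ℕ} {u v : List ℕ}

theorem append_cons_mem_words (hr : r ∈ extremes S) (hT : T ⊆ S \ extremes S)
    (hu : u ∈ words T) (hv : v ∈ words (S.erase r \ T)) : u ++ r :: v ∈ words S := by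
  obtain ⟨hund, rfl⟩ := mem_words.mp hu
  obtain ⟨hvnd, hvS⟩ := mem_words.mp hv
  have hrS : r ∈ S := mem_of_mem_filter r hr
  rw [Finset.ext_iff] at hvS
  simp only [List.mem_toFinset, mem_sdiff, mem_erase] at hvS
  have huS : ∀ x ∈ u, x ∈ S ∧ x ∉ extremes S := fun x hx =>
    mem_sdiff.mp (hT (List.mem_toFinset.mpr hx))
  refine mem_words.mpr ⟨?_, ?_⟩
  · simp only [List.nodup_append, List.nodup_cons, List.mem_cons]
    refine ⟨hund, ⟨fun h => (hvS r).mp h |>.1.1 rfl, hvnd⟩, ?_⟩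
    rintro x hx y (rfl | hy) rfl
    · exact (huS x hx).2 hr
    · exact ((hvS x).mp hy).2 (by simpa using hx)
  · ext x
    simp only [List.toFinset_append, List.toFinset_cons, mem_union, mem_insert, List.mem_toFinset]
    grind

theorem not_mem_extremes_of_mem_words (hT : T ⊆ S \ extremes S) (hu : u ∈ words T) :
    ∀ x ∈ u, x ∉ extremes S := fun x hx => by
  obtain ⟨-, rfl⟩ := mem_words.mp hu
  exact (mem_sdiff.mp (hT (List.mem_toFinset.mpr hx))).2

theorem findIdx_isExtreme_append_cons (hr : r ∈ extremes S) (hT : T ⊆ S \ extremes S)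
    (hu : u ∈ words T) (hv : v ∈ words (S.erase r \ T)) :
    (u ++ r :: v).findIdx (isExtreme (u ++ r :: v)) = u.length :=
  have hl := append_cons_mem_words hr hT hu hv
  findIdx_isExtreme_append_cons_of_isExtreme
    (fun x hx => Bool.eq_false_iff.mpr fun h =>
      not_mem_extremes_of_mem_words hT hu x hx ((isExtreme_eq_true_iff hl).mp h))
    ((isExtreme_eq_true_iff hl).mpr hr)

theorem minmaxTree_append_cons_of_mem_words (hr : r ∈ extremes S) (hT : T ⊆ S \ extremes S)
    (hu : u ∈ words T) (hv : v ∈ words (S.erase r \ T)) :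
    minmaxTree (u ++ r :: v) = .node r (minmaxTree u) (minmaxTree v) :=
  have hl := append_cons_mem_words hr hT hu hv
  minmaxTree_append_cons
    (fun x hx => Bool.eq_false_iff.mpr fun h =>
      not_mem_extremes_of_mem_words hT hu x hx ((isExtreme_eq_true_iff hl).mp h))
    ((isExtreme_eq_true_iff hl).mpr hr)

theorem mem_words_of_append_cons (hl : u ++ r :: v ∈ words S) :
    u ∈ words u.toFinset ∧ v ∈ words (S.erase r \ u.toFinset) := by
  obtain ⟨hnd, rfl⟩ := mem_words.mp hl
  simp only [List.nodup_append, List.nodup_cons, List.mem_cons] at hnd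
  refine ⟨mem_words.mpr ⟨hnd.1, rfl⟩, mem_words.mpr ⟨hnd.2.1.2, ?_⟩⟩
  ext x
  simp only [List.mem_toFinset, mem_sdiff, mem_erase, List.toFinset_append, List.toFinset_cons,
    mem_union, mem_insert]
  grind

end Join
theorem card_filter_words_eq_sum (S : Finset ℕ) (P : List ℕ → Prop) [DecidablePred P]
    (hP : ¬ P []) :
    #{l ∈ words S | P l} = ∑ rT ∈ extremes S ×ˢ (S \ extremes S).powerset,
      #{uv ∈ words rT.2 ×ˢ words (S.erase rT.1 \ rT.2) | P (uv.1 ++ rT.1 :: uv.2)} := by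
  rw [← card_sigma]
  symm
  refine card_bij (fun x _ => x.2.1 ++ x.1.1 :: x.2.2) ?_ ?_ ?_
  · rintro ⟨⟨r, T⟩, u, v⟩ hx
    simp only [mem_sigma, mem_product, mem_powerset, mem_filter] at hx ⊢
    obtain ⟨⟨hr, hT⟩, ⟨hu, hv⟩, hPl⟩ := hx
    exact ⟨append_cons_mem_words hr hT hu hv, hPl⟩
  · rintro ⟨⟨r, T⟩, u, v⟩ hx ⟨⟨r', T'⟩, u', v'⟩ hx' heq
    simp only [mem_sigma, mem_product, mem_powerset, mem_filter] at hx hx' heq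
    obtain ⟨⟨hr, hT⟩, ⟨hu, hv⟩, -⟩ := hx
    obtain ⟨⟨hr', hT'⟩, ⟨hu', hv'⟩, -⟩ := hx'
    have hlen : u.length = u'.length := by
      rw [← findIdx_isExtreme_append_cons hr hT hu hv, heq,
        findIdx_isExtreme_append_cons hr' hT' hu' hv']
    obtain ⟨rfl, hrv⟩ := List.append_inj heq hlen
    obtain ⟨rfl, rfl⟩ := List.cons_eq_cons.mp hrv
    obtain rfl : T = T' := (mem_words.mp hu).2.symm.trans (mem_words.mp hu').2
    rfl
  · intro l hl
    obtain ⟨hlS, hPl⟩ := mem_filter.mp hl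
    have hne : l ≠ [] := by rintro rfl; exact hP hPl
    have hk := findIdx_isExtreme_lt_length hne
    set k := l.findIdx (isExtreme l)
    have hsplit : l.take k ++ l[k] :: l.drop (k + 1) = l := by
      rw [List.getElem_cons_drop, List.take_append_drop]
    have hparts := mem_words_of_append_cons (hsplit ▸ hlS)
    refine ⟨⟨⟨l[k], (l.take k).toFinset⟩, l.take k, l.drop (k + 1)⟩, ?_, hsplit⟩
    simp only [mem_sigma, mem_product, mem_powerset, mem_filter]
    refine ⟨⟨(isExtreme_eq_true_iff hlS).mp List.findIdx_getElem, ?_⟩, hparts,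
      hsplit.symm ▸ hPl⟩
    intro x hx
    obtain ⟨i, hi, rfl⟩ := List.getElem_of_mem (List.mem_toFinset.mp hx)
    have hik : i < k := lt_of_lt_of_le hi (List.length_take_le k l)
    rw [List.getElem_take, mem_sdiff, ← isExtreme_eq_true_iff hlS,
      List.not_of_lt_findIdx hik]
    exact ⟨(mem_words.mp hlS).2 ▸ List.mem_toFinset.mpr (List.getElem_mem _), by simp⟩

def oneChildProb (m j : ℕ) : ℚ :=
  if j = m then 0 else if m = 2 then 1 else if j = 1 ∨ j = m - 1 then 2 / 3 else 1 / 3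

/-- The proportion of words of length `m` whose `j`-th entry has one child, among those whose
root is their `(s + 1)`-th letter. -/
def splitProb (m j s : ℕ) : ℚ :=
  if j ≤ s then oneChildProb s j
  else if j = s + 1 then (if s = 0 then 1 else 0)
  else oneChildProb (m - 1 - s) (j - s - 1)

/-- `(m - 2)! * rootWeight m s` words of length `m` have their root at position `s + 1`. -/
def rootWeight (m s : ℕ) : ℚ := 2 * ((m : ℚ) - 1 - s)

theorem sum_rootWeight (m : ℕ) : ∑ s ∈ range (m - 1), rootWeight m s = m * (m - 1) := by
  obtain _ | m := m
  · simp
  simp only [rootWeight, Nat.add_sub_cancel, Nat.cast_add_one, add_sub_cancel_right]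
  induction m with
  | zero => simp
  | succ m ih =>
    rw [sum_range_succ', ← sub_eq_zero]
    simp_rw [Nat.cast_add_one, show ∀ s : ℕ, (m : ℚ) + 1 - (s + 1) = m - s by intro; ring, ih]
    ring

theorem sum_rootWeight_mul_ite {m p : ℕ} (hp : p < m) (a : ℚ) :
    ∑ s ∈ range (m - 1), rootWeight m s * (if s = p then a else 0) = rootWeight m p * a := by
  simp only [mul_ite, mul_zero, sum_ite_eq', mem_range]
  split_ifs with h
  · rfl
  · obtain rfl : p = m - 1 := by omega
    simp [rootWeight, Nat.cast_sub (by omega : 1 ≤ m)]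

theorem sum_rootWeight_mul_splitProb_self (m : ℕ) :
    ∑ s ∈ range (m - 1), rootWeight m s * splitProb m m s = 0 := by
  refine sum_eq_zero fun s hs => ?_
  have : s < m - 1 := mem_range.mp hs
  simp [splitProb, oneChildProb, show ¬ m ≤ s by omega, show m ≠ s + 1 by omega,
    show m - s - 1 = m - 1 - s by omega]

theorem sum_rootWeight_mul_splitProb_one {m : ℕ} (hm : 3 ≤ m) :
    ∑ s ∈ range (m - 1), rootWeight m s * splitProb m 1 s = m * (m - 1) * (2 / 3) := by
  have hX : ∀ s ∈ range (m - 1), splitProb m 1 s =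
      2 / 3 + (if s = 0 then 1 / 3 else 0) + (if s = 1 then -2 / 3 else 0)
        + (if s = 2 then 1 / 3 else 0) := by
    intro s hs
    have := mem_range.mp hs
    unfold splitProb oneChildProb
    split_ifs <;> first | omega | norm_num
  rw [sum_congr rfl fun s hs => by rw [hX s hs]]
  simp only [mul_add, sum_add_distrib, ← sum_mul, sum_rootWeight,
    sum_rootWeight_mul_ite (show 0 < m by omega), sum_rootWeight_mul_ite (show 1 < m by omega),
    sum_rootWeight_mul_ite (show 2 < m by omega)]
  simp only [rootWeight]
  push_cast
  ring

theorem sum_rootWeight_mul_splitProb_sub_one {m : ℕ} (hm : 3 ≤ m) :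
    ∑ s ∈ range (m - 1), rootWeight m s * splitProb m (m - 1) s = m * (m - 1) * (2 / 3) := by
  obtain ⟨k, rfl⟩ : ∃ k, m = k + 3 := ⟨m - 3, by omega⟩
  have hX : ∀ s ∈ range (k + 3 - 1), splitProb (k + 3) (k + 3 - 1) s =
      2 / 3 + (if s = k then 1 / 3 else 0) + (if s = k + 1 then -2 / 3 else 0) := by
    intro s hs
    have := mem_range.mp hs
    unfold splitProb oneChildProb
    split_ifs <;> first | omega | norm_num
  rw [sum_congr rfl fun s hs => by rw [hX s hs]]
  simp only [mul_add, sum_add_distrib, ← sum_mul, sum_rootWeight,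
    sum_rootWeight_mul_ite (show k < k + 3 by omega),
    sum_rootWeight_mul_ite (show k + 1 < k + 3 by omega)]
  simp only [rootWeight]
  push_cast
  ring

theorem sum_rootWeight_mul_splitProb_of_le {m j : ℕ} (hj : 2 ≤ j) (hjm : j + 2 ≤ m) :
    ∑ s ∈ range (m - 1), rootWeight m s * splitProb m j s = m * (m - 1) * (1 / 3) := by
  obtain ⟨k, rfl⟩ : ∃ k, j = k + 2 := ⟨j - 2, by omega⟩
  have hX : ∀ s ∈ range (m - 1), splitProb m (k + 2) s =
      1 / 3 + (if s = k then 1 / 3 else 0) + (if s = k + 1 then -1 / 3 else 0)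
        + (if s = k + 2 then -1 / 3 else 0) + (if s = k + 3 then 1 / 3 else 0) := by
    intro s hs
    have := mem_range.mp hs
    unfold splitProb oneChildProb
    split_ifs <;> first | omega | norm_num
  rw [sum_congr rfl fun s hs => by rw [hX s hs]]
  simp only [mul_add, sum_add_distrib, ← sum_mul, sum_rootWeight,
    sum_rootWeight_mul_ite (show k < m by omega), sum_rootWeight_mul_ite (show k + 1 < m by omega),
    sum_rootWeight_mul_ite (show k + 2 < m by omega),
    sum_rootWeight_mul_ite (show k + 3 < m by omega)]
  simp only [rootWeight]
  push_cast
  ring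

theorem sum_rootWeight_mul_splitProb {m j : ℕ} (hm : 2 ≤ m) (hj : 1 ≤ j) (hjm : j ≤ m) :
    ∑ s ∈ range (m - 1), rootWeight m s * splitProb m j s = m * (m - 1) * oneChildProb m j := by
  unfold oneChildProb
  split_ifs with hjm' hm2 hj1
  · rw [hjm', sum_rootWeight_mul_splitProb_self, mul_zero]
  · obtain rfl : j = 1 := by omega
    subst hm2
    norm_num [splitProb, oneChildProb, rootWeight]
  · rcases hj1 with rfl | rfl
    exacts [sum_rootWeight_mul_splitProb_one (by omega),
      sum_rootWeight_mul_splitProb_sub_one (by omega)]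
  · exact sum_rootWeight_mul_splitProb_of_le (by omega) (by omega)

theorem sum_choose_mul_factorial_mul_factorial (n : ℕ) (X : ℕ → ℚ) :
    ∑ s ∈ range (n + 1), n.choose s * ((s ! : ℚ) * (n + 1 - s)! * X s) =
      n ! / 2 * ∑ s ∈ range (n + 1), rootWeight (n + 2) s * X s := by
  rw [mul_sum]
  refine sum_congr rfl fun s hs => ?_
  have hs : s ≤ n := Nat.lt_succ_iff.mp (mem_range.mp hs)
  have key := congrArg (Nat.cast (R := ℚ)) (Nat.choose_mul_factorial_mul_factorial hs)
  rw [Nat.succ_sub hs, Nat.factorial_succ, rootWeight]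
  push_cast [Nat.cast_sub hs] at key ⊢
  linear_combination (↑n + 1 - ↑s) * X s * key

noncomputable def oneChildCount (S : Finset ℕ) (j : ℕ) : ℕ :=
  #{l ∈ words S | HasOneChildAt j l}

section Branch

variable {S T : Finset ℕ} {r j : ℕ} (hr : r ∈ extremes S) (hT : T ⊆ S \ extremes S)
include hr hT

theorem card_erase_sdiff : #(S.erase r \ T) = #S - 1 - #T := by
  have hTr : T ⊆ S.erase r := fun x hx => by
    obtain ⟨hxS, hxe⟩ := mem_sdiff.mp (hT hx)
    exact mem_erase.mpr ⟨fun h => hxe (h ▸ hr), hxS⟩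
  rw [card_sdiff_of_subset hTr, card_erase_of_mem (mem_of_mem_filter r hr)]

theorem card_filter_append_cons_of_le (hj : 1 ≤ j) (hjT : j ≤ #T) :
    #{uv ∈ words T ×ˢ words (S.erase r \ T) | HasOneChildAt j (uv.1 ++ r :: uv.2)} =
      oneChildCount T j * (#(S.erase r \ T))! := by
  rw [filter_congr (q := fun uv => HasOneChildAt j uv.1), filter_product_left, card_product,
    card_words, oneChildCount]
  rintro ⟨u, v⟩ huv
  obtain ⟨hu, hv⟩ := mem_product.mp huv
  exact hasOneChildAt_append_cons_of_le (minmaxTree_append_cons_of_mem_words hr hT hu hv)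
    (mem_words.mp (append_cons_mem_words hr hT hu hv)).1 hj (length_of_mem_words hu ▸ hjT)

theorem card_filter_append_cons_card_add_one (hV : (S.erase r \ T).Nonempty) :
    #{uv ∈ words T ×ˢ words (S.erase r \ T) | HasOneChildAt (#T + 1) (uv.1 ++ r :: uv.2)} =
      if T = ∅ then (#(S.erase r \ T))! else 0 := by
  rw [filter_congr (q := fun _ => T = ∅), filter_const]
  · split_ifs with hT0
    · rw [card_product, card_words, card_words, hT0, card_empty, Nat.factorial_zero, one_mul]
    · rfl
  rintro ⟨u, v⟩ huv
  obtain ⟨hu, hv⟩ := mem_product.mp huv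
  have hvne : v ≠ [] := by
    rintro rfl
    obtain ⟨-, hV0⟩ := mem_words.mp hv
    exact hV.ne_empty hV0.symm
  rw [← length_of_mem_words hu, hasOneChildAt_append_cons_length
    (minmaxTree_append_cons_of_mem_words hr hT hu hv) hvne, ← (mem_words.mp hu).2]
  simp

theorem card_filter_append_cons_of_lt (hj : #T + 1 < j) (hjS : j ≤ #S) :
    #{uv ∈ words T ×ˢ words (S.erase r \ T) | HasOneChildAt j (uv.1 ++ r :: uv.2)} =
      (#T)! * oneChildCount (S.erase r \ T) (j - #T - 1) := by
  rw [filter_congr (q := fun uv => HasOneChildAt (j - #T - 1) uv.2), filter_product_right,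
    card_product, card_words, oneChildCount]
  rintro ⟨u, v⟩ huv
  obtain ⟨hu, hv⟩ := mem_product.mp huv
  have hulen := length_of_mem_words hu
  have hvlen := length_of_mem_words hv
  rw [card_erase_sdiff hr hT] at hvlen
  rw [← hulen] at hj ⊢
  exact hasOneChildAt_append_cons_of_lt (minmaxTree_append_cons_of_mem_words hr hT hu hv)
    (mem_words.mp (append_cons_mem_words hr hT hu hv)).1 hj (by omega)

theorem card_filter_append_cons_eq_splitProb (hS : 2 ≤ #S) (hj : 1 ≤ j) (hjS : j ≤ #S)
    (ih : ∀ U : Finset ℕ, #U < #S → ∀ i, 1 ≤ i → i ≤ #U →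
      (oneChildCount U i : ℚ) = (#U)! * oneChildProb #U i) :
    (#{uv ∈ words T ×ˢ words (S.erase r \ T) | HasOneChildAt j (uv.1 ++ r :: uv.2)} : ℚ) =
      (#T)! * (#S - 1 - #T)! * splitProb #S j #T := by
  have hTS : #T ≤ #S - 2 := card_sdiff_extremes hS ▸ card_le_card hT
  have hV := card_erase_sdiff hr hT
  unfold splitProb
  split_ifs with h1 h2 h3
  · rw [card_filter_append_cons_of_le hr hT hj h1, hV, Nat.cast_mul, ih T (by omega) j hj h1]
    ring
  · subst h2
    rw [card_filter_append_cons_card_add_one hr hT (card_pos.mp (by omega)), hV,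
      if_pos (card_eq_zero.mp h3), h3]
    simp
  · subst h2
    rw [card_filter_append_cons_card_add_one hr hT (card_pos.mp (by omega)),
      if_neg (mt card_eq_zero.mpr h3)]
    simp
  · rw [card_filter_append_cons_of_lt hr hT (by omega) hjS, Nat.cast_mul,
      ih _ (by omega) _ (by omega) (by omega), hV]
    ring

end Branch

theorem oneChildCount_eq (S : Finset ℕ) {j : ℕ} (hj : 1 ≤ j) (hjS : j ≤ #S) :
    (oneChildCount S j : ℚ) = (#S)! * oneChildProb #S j := by
  induction hm : #S using Nat.strong_induction_on generalizing S j with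
  | _ m ih =>
  rcases Nat.lt_or_ge m 2 with hm2 | hm2
  · obtain rfl : j = m := by omega
    suffices oneChildCount S j = 0 by simp [this, oneChildProb]
    rw [oneChildCount, card_eq_zero, filter_eq_empty_iff]
    intro l hl
    obtain ⟨x, rfl⟩ := List.length_eq_one_iff.mp ((length_of_mem_words hl).trans (by omega))
    simp [HasOneChildAt, minmaxTree_singleton, BTree.numChildren]
  subst hm
  have hbranch : ∀ rT ∈ extremes S ×ˢ (S \ extremes S).powerset,
      (#{uv ∈ words rT.2 ×ˢ words (S.erase rT.1 \ rT.2) |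
          HasOneChildAt j (uv.1 ++ rT.1 :: uv.2)} : ℚ) =
        (#rT.2)! * (#S - 1 - #rT.2)! * splitProb #S j #rT.2 := fun rT hrT =>
    card_filter_append_cons_eq_splitProb (mem_product.mp hrT).1 (mem_powerset.mp (mem_product.mp hrT).2)
      hm2 hj hjS fun U hU i hi hiU => ih _ hU U hi hiU rfl
  rw [oneChildCount, card_filter_words_eq_sum S _ (not_hasOneChildAt_nil j), Nat.cast_sum,
    sum_congr rfl hbranch, sum_product]
  dsimp only
  rw [sum_const, card_extremes hm2,
    sum_powerset_apply_card (fun s => (s ! : ℚ) * (#S - 1 - s)! * splitProb #S j s),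
    card_sdiff_extremes hm2]
  obtain ⟨n, hn⟩ : ∃ n, #S = n + 2 := ⟨#S - 2, by omega⟩
  have hsum := sum_rootWeight_mul_splitProb hm2 hj hjS
  simp only [hn, show n + 2 - 1 = n + 1 from rfl, show n + 2 - 2 = n from rfl,
    nsmul_eq_mul] at hsum ⊢
  rw [sum_choose_mul_factorial_mul_factorial, hsum, Nat.factorial_succ, Nat.factorial_succ]
  push_cast
  ring

theorem permList_injective (n : ℕ) : Function.Injective (permList n) := by
  intro p q h
  ext x
  simpa using congrFun (List.ofFn_injective h) x

theorem permList_mem_words {n : ℕ} (p : Equiv.Perm (Fin n)) :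
    permList n p ∈ words (Icc 1 n) := by
  refine mem_words.mpr
    ⟨List.nodup_ofFn.mpr fun a b h => p.injective (Fin.ext (by simpa using h)), ?_⟩
  ext z
  simp only [permList, List.mem_toFinset, List.mem_ofFn, mem_Icc]
  constructor
  · rintro ⟨a, rfl⟩
    have := (p a).isLt
    omega
  · rintro ⟨h1, h2⟩
    exact ⟨p.symm ⟨z - 1, by omega⟩, by simp; omega⟩

theorem image_permList_univ (n : ℕ) : univ.image (permList n) = words (Icc 1 n) :=
  eq_of_subset_of_card_le (image_subset_iff.mpr fun p _ => permList_mem_words p) (by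
    rw [card_image_of_injective _ (permList_injective n), card_univ, Fintype.card_perm,
      Fintype.card_fin, card_words, Nat.card_Icc, Nat.add_sub_cancel])

theorem card_filter_hasOneChildAt_permList (n i : ℕ) :
    #{p : Equiv.Perm (Fin n) | HasOneChildAt i (permList n p)} = oneChildCount (Icc 1 n) i := by
  rw [oneChildCount, ← image_permList_univ, filter_image,
    card_image_of_injective _ (permList_injective n)]

theorem one_child_count_general (n : ℕ) (i : ℕ) (hi1 : 2 ≤ i) (hi2 : i ≤ n - 2) :
    (Finset.univ.filter (fun p : Equiv.Perm (Fin n) =>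
        (minmaxTree (permList n p)).numChildren (entryAt n p i) = 1)).card =
      n.factorial / 3 := by
  have hcount := oneChildCount_eq (Icc 1 n) (j := i) (by omega) (by simp; omega)
  rw [Nat.card_Icc, Nat.add_sub_cancel, oneChildProb, if_neg (by omega), if_neg (by omega),
    if_neg (by omega)] at hcount
  change #{p | HasOneChildAt i (permList n p)} = _
  apply Nat.cast_injective (R := ℚ)
  rw [card_filter_hasOneChildAt_permList, hcount,
    Nat.cast_div (Nat.dvd_factorial (by norm_num) (by omega)) (by norm_num)]
  ring

/-- For `n ≥ 4` and `2 ≤ i ≤ n − 2`, the number of permutations `p`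
of `{1,…,n}` in which the entry `p_i` has exactly one child in the minmax tree is
exactly `n!/3`. -/
theorem one_child_count (n : ℕ) (hn : 4 ≤ n) (i : ℕ) (hi1 : 2 ≤ i) (hi2 : i ≤ n - 2) :
    (Finset.univ.filter (fun p : Equiv.Perm (Fin n) =>
        (minmaxTree (permList n p)).numChildren (entryAt n p i) = 1)).card =
      n.factorial / 3 :=
  one_child_count_general n i hi1 hi2
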